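/- arXiv:1307.0244 — 2 statements merged into one kernel-verified Lean document; each statement's English description precedes it below -/
import Mathlib

section
/- Let L be a discrete join semilattice (every maximal chain in every closed interval is finite) that is not semimodular, i.e. there exist elements x, y such that some element z is covered by both x and y but x ∨ y does not cover both x and y. Then the up-down distance d(u,v) = h(u, u∨v) + h(v, u∨v) fails the triangle inequality: there exist x, y, z in L with d(x,z) > d(x,y) + d(y,z). -/
/-- `C` is a maximal chain within the set `I`: a chain contained in `I` not properly
contained in any other chain contained in `I`. -/
def IsMaxChainIn {P : Type*} [PartialOrder P] (I C : Set P) : Prop :=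
  C ⊆ I ∧ IsChain (· ≤ ·) C ∧
    ∀ ⦃C' : Set P⦄, C' ⊆ I → IsChain (· ≤ ·) C' → C ⊆ C' → C' = C

/-- A poset is discrete if every maximal chain of every closed interval `[x,y]` is finite. -/
def IsDiscretePoset (P : Type*) [PartialOrder P] : Prop :=
  ∀ x y : P, ∀ C : Set P, IsMaxChainIn (Set.Icc x y) C → C.Finite

/-- The height of `y` above `x`: the least cardinality of a finite maximal chain of the
interval `[x,y]`, minus 1. -/
noncomputable def intervalHeight {P : Type*} [PartialOrder P] (x y : P) : ℕ :=
  sInf {n : ℕ | ∃ C : Set P, IsMaxChainIn (Set.Icc x y) C ∧ C.Finite ∧ C.ncard = n + 1}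

/-- The Jordan–Dedekind chain condition: in every interval `[x,y]`, all maximal chains
have the same number of elements. -/
def JordanDedekind (P : Type*) [PartialOrder P] : Prop :=
  ∀ x y : P, ∀ C C' : Set P, IsMaxChainIn (Set.Icc x y) C →
    IsMaxChainIn (Set.Icc x y) C' → C.ncard = C'.ncard

/-- The Hasse diagram of a poset: the simple undirected graph with an edge between `a`
and `b` iff one covers the other. -/
def hasseGraph (P : Type*) [PartialOrder P] : SimpleGraph P where
  Adj a b := a ⋖ b ∨ b ⋖ a
  symm := ⟨fun a b h => h.symm⟩
  loopless := ⟨fun a h => by rcases h with h | h <;> exact h.ne rfl⟩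

/-- A join semilattice is semimodular if whenever some element `z` is covered by both of
the distinct elements `x` and `y`, the join `x ⊔ y` covers both `x` and `y`. -/
def Semimodular (L : Type*) [SemilatticeSup L] : Prop :=
  ∀ x y z : L, x ≠ y → z ⋖ x → z ⋖ y → x ⋖ x ⊔ y ∧ y ⋖ x ⊔ y

section Aux
variable {P : Type*} [PartialOrder P]

lemma exists_maxChainIn (I c : Set P) (hcI : c ⊆ I) (hc : IsChain (· ≤ ·) c) :
    ∃ C, IsMaxChainIn I C ∧ c ⊆ C := by
  have H := zorn_subset_nonempty {s : Set P | s ⊆ I ∧ IsChain (· ≤ ·) s} ?_ c ⟨hcI, hc⟩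
  · obtain ⟨M, hcM, hM⟩ := H
    exact ⟨M, ⟨hM.prop.1, hM.prop.2,
      fun C' hC'I hC' hMC' => (hM.eq_of_subset ⟨hC'I, hC'⟩ hMC').symm⟩, hcM⟩
  rintro cs hcs₀ hcs₁ ⟨s, hs⟩
  refine ⟨⋃₀ cs, ⟨fun a ⟨t, ht, hat⟩ => (hcs₀ ht).1 hat, ?_⟩, fun _ => Set.subset_sUnion_of_mem⟩
  rintro y ⟨sy, hsy, hysy⟩ z ⟨sz, hsz, hzsz⟩ hyz
  obtain rfl | hsseq := eq_or_ne sy sz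
  · exact (hcs₀ hsy).2 hysy hzsz hyz
  cases' hcs₁ hsy hsz hsseq with h h
  · exact (hcs₀ hsz).2 (h hysy) hzsz hyz
  · exact (hcs₀ hsy).2 hysy (h hzsz) hyz

/-- A maximal chain in `[x,s]` contains both endpoints. -/
lemma maxChainIn_endpoints {x s : P} (hxs : x ≤ s) {C : Set P}
    (hC : IsMaxChainIn (Set.Icc x s) C) : x ∈ C ∧ s ∈ C := by
  obtain ⟨hCI, hCchain, hmax⟩ := hC
  have hsub : C ⊆ insert x (insert s C) := fun a ha => Set.mem_insert_iff.2
    (Or.inr (Set.mem_insert_iff.2 (Or.inr ha)))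
  have hIcc : insert x (insert s C) ⊆ Set.Icc x s := by
    rintro a (rfl | rfl | ha)
    · exact ⟨le_refl a, hxs⟩
    · exact ⟨hxs, le_refl a⟩
    · exact hCI ha
  have hchain : IsChain (· ≤ ·) (insert x (insert s C)) := by
    rintro a (rfl | rfl | ha) b (rfl | rfl | hb) hab
    · exact absurd rfl hab
    · exact Or.inl hxs
    · exact Or.inl (hCI hb).1
    · exact Or.inr hxs
    · exact absurd rfl hab
    · exact Or.inr (hCI hb).2
    · exact Or.inr (hCI ha).1
    · exact Or.inl (hCI ha).2
    · exact hCchain ha hb hab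
  have heq := hmax hIcc hchain hsub
  constructor
  · rw [← heq]; exact Set.mem_insert _ _
  · rw [← heq]; exact Set.mem_insert_iff.2 (Or.inr (Set.mem_insert _ _))

lemma intervalHeight_self (x : P) : intervalHeight x x = 0 := by
  apply Nat.eq_zero_of_le_zero
  apply Nat.sInf_le
  refine ⟨{x}, ⟨?_, ?_, ?_⟩, Set.finite_singleton x, by simp⟩
  · simp [Set.Icc_self]
  · exact Set.subsingleton_singleton.isChain
  · intro C' hC'I hC' hsub
    apply Set.Subset.antisymm _ hsub
    intro a ha
    have := hC'I ha
    simp [Set.Icc_self] at this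
    simp [this]

lemma intervalHeight_covBy {z x : P} (h : z ⋖ x) : intervalHeight z x ≤ 1 := by
  apply Nat.sInf_le
  have hzx : z ≠ x := h.lt.ne
  refine ⟨{z, x}, ⟨?_, ?_, ?_⟩, (Set.finite_singleton z).insert x |>.subset (by simp [Set.pair_comm]), ?_⟩
  · rintro a (rfl | rfl)
    · exact ⟨le_refl a, h.lt.le⟩
    · exact ⟨h.lt.le, le_refl a⟩
  · rintro a (rfl | rfl) b (rfl | rfl) hab
    · exact absurd rfl hab
    · exact Or.inl h.lt.le
    · exact Or.inr h.lt.le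
    · exact absurd rfl hab
  · intro C' hC'I hC' hsub
    apply Set.Subset.antisymm _ hsub
    intro a ha
    obtain ⟨hza, hax⟩ := hC'I ha
    rcases eq_or_lt_of_le hza with rfl | hza'
    · exact Set.mem_insert _ _
    · rcases eq_or_lt_of_le hax with rfl | hax'
      · exact Set.mem_insert_iff.2 (Or.inr rfl)
      · exact absurd hax' (h.2 hza')
  · rw [Set.ncard_pair hzx]

lemma intervalHeight_mem (hdisc : IsDiscretePoset P) {x s : P} (hxs : x ≤ s) :
    ∃ C : Set P, IsMaxChainIn (Set.Icc x s) C ∧ C.Finite ∧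
      C.ncard = intervalHeight x s + 1 := by
  have hne : {n : ℕ | ∃ C : Set P, IsMaxChainIn (Set.Icc x s) C ∧ C.Finite ∧
      C.ncard = n + 1}.Nonempty := by
    obtain ⟨C, hC, hxC⟩ := exists_maxChainIn (Set.Icc x s) {x}
      (by simpa using Set.left_mem_Icc.2 hxs) Set.subsingleton_singleton.isChain
    have hfin : C.Finite := hdisc x s C hC
    have hCne : C.Nonempty := ⟨x, hxC rfl⟩
    have hpos : 0 < C.ncard := (Set.ncard_pos hfin).2 hCne
    exact ⟨C.ncard - 1, C, hC, hfin, by omega⟩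
  exact Nat.sInf_mem hne

lemma intervalHeight_pos (hdisc : IsDiscretePoset P) {x s : P} (hxs : x < s) :
    1 ≤ intervalHeight x s := by
  obtain ⟨C, hC, hfin, hcard⟩ := intervalHeight_mem hdisc hxs.le
  obtain ⟨hxC, hsC⟩ := maxChainIn_endpoints hxs.le hC
  have : 2 ≤ C.ncard := by
    have : ({x, s} : Set P) ⊆ C := by rintro a (rfl | rfl) <;> assumption
    calc 2 = ({x, s} : Set P).ncard := (Set.ncard_pair hxs.ne).symm
    _ ≤ C.ncard := Set.ncard_le_ncard this hfin
  omega

lemma intervalHeight_two (hdisc : IsDiscretePoset P) {x s : P} (hxs : x < s)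
    (hcov : ¬ x ⋖ s) : 2 ≤ intervalHeight x s := by
  obtain ⟨C, hC, hfin, hcard⟩ := intervalHeight_mem hdisc hxs.le
  obtain ⟨hxC, hsC⟩ := maxChainIn_endpoints hxs.le hC
  obtain ⟨w, hxw, hws⟩ : ∃ w, x < w ∧ w < s := by
    by_contra hw
    push_neg at hw
    exact hcov ⟨hxs, hw⟩
  have h3 : 3 ≤ C.ncard := by
    by_contra h3
    push_neg at h3
    have hsub : ({x, s} : Set P) ⊆ C := by rintro a (rfl | rfl) <;> assumption
    have hCeq : ({x, s} : Set P) = C := Set.eq_of_subset_of_ncard_le hsub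
      (by rw [Set.ncard_pair hxs.ne]; omega) hfin
    have hIcc : insert w ({x, s} : Set P) ⊆ Set.Icc x s := by
      rintro a (rfl | rfl | rfl)
      · exact ⟨hxw.le, hws.le⟩
      · exact ⟨le_refl a, hxs.le⟩
      · exact ⟨hxs.le, le_refl a⟩
    have hchain : IsChain (· ≤ ·) (insert w ({x, s} : Set P)) := by
      rintro a (rfl | rfl | rfl) b (rfl | rfl | rfl) hab <;>
        first
          | exact absurd rfl hab
          | exact Or.inl hxw.le | exact Or.inr hxw.le
          | exact Or.inl hws.le | exact Or.inr hws.le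
          | exact Or.inl hxs.le | exact Or.inr hxs.le
    have heq := hC.2.2 hIcc hchain (hCeq ▸ Set.subset_insert _ _)
    have : w ∈ C := by rw [← heq]; exact Set.mem_insert _ _
    rw [← hCeq] at this
    rcases this with rfl | rfl
    · exact hxw.ne rfl
    · exact hws.ne rfl
  omega

end Aux

/-- In a discrete join semilattice that is not semimodular, the up–down distance
`d(u,v) = h(u, u∨v) + h(v, u∨v)` fails the triangle inequality. -/
theorem stmt6 {L : Type*} [SemilatticeSup L]
    (hdisc : IsDiscretePoset L)
    (hnsm : ∃ x y z : L, x ≠ y ∧ z ⋖ x ∧ z ⋖ y ∧ ¬ (x ⋖ x ⊔ y ∧ y ⋖ x ⊔ y)) :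
    ∃ x y z : L,
      (intervalHeight x (x ⊔ y) + intervalHeight y (x ⊔ y)) +
        (intervalHeight y (y ⊔ z) + intervalHeight z (y ⊔ z)) <
      intervalHeight x (x ⊔ z) + intervalHeight z (x ⊔ z) := by
  obtain ⟨x, y, z, hxy, hzx, hzy, hns⟩ := hnsm
  -- x and y are incomparable
  have hxny : ¬ x ≤ y := by
    intro h
    rcases eq_or_lt_of_le h with rfl | h'
    · exact hxy rfl
    · exact hzy.2 hzx.lt h'
  have hynx : ¬ y ≤ x := by
    intro h
    rcases eq_or_lt_of_le h with rfl | h'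
    · exact hxy rfl
    · exact hzx.2 hzy.lt h'
  have hxlt : x < x ⊔ y := lt_of_le_of_ne le_sup_left (fun h => hynx (h ▸ le_sup_right))
  have hylt : y < x ⊔ y := lt_of_le_of_ne le_sup_right (fun h => hxny (h ▸ le_sup_left))
  -- key helper computing the two sides
  have key : ∀ a b c : L, c ⋖ a → c ⋖ b → a ⊔ c = a → b ⊔ c = b →
      2 ≤ intervalHeight a (a ⊔ b) → 1 ≤ intervalHeight b (a ⊔ b) →
      (intervalHeight a (a ⊔ c) + intervalHeight c (a ⊔ c)) +
        (intervalHeight c (c ⊔ b) + intervalHeight b (c ⊔ b)) <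
      intervalHeight a (a ⊔ b) + intervalHeight b (a ⊔ b) := by
    intro a b c hca hcb hac hbc h2 h1
    rw [hac, sup_comm c b, hbc]
    have e1 : intervalHeight a a = 0 := intervalHeight_self a
    have e2 : intervalHeight c a ≤ 1 := intervalHeight_covBy hca
    have e3 : intervalHeight c b ≤ 1 := intervalHeight_covBy hcb
    have e4 : intervalHeight b b = 0 := intervalHeight_self b
    omega
  rcases not_and_or.1 hns with hnc | hnc
  · refine ⟨x, z, y, key x y z hzx hzy (sup_eq_left.2 hzx.lt.le) (sup_eq_left.2 hzy.lt.le)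
      (intervalHeight_two hdisc hxlt hnc) (intervalHeight_pos hdisc hylt)⟩
  · have := key y x z hzy hzx (sup_eq_left.2 hzy.lt.le) (sup_eq_left.2 hzx.lt.le)
      (intervalHeight_two hdisc (sup_comm x y ▸ hylt) (sup_comm x y ▸ hnc))
      (intervalHeight_pos hdisc (sup_comm x y ▸ hxlt))
    exact ⟨y, z, x, this⟩
end

section
/- Let L be a discrete, semimodular join semilattice (every maximal chain in every closed interval is finite; whenever an element z is covered by both x and y, the join x ∨ y covers both x and y). Then for all x, y in L, the up-down distance h(x, x∨y) + h(y, x∨y) equals the zigzag distance between x and y, i.e. their graph-theoretical distance in the Hasse diagram of L. -/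
section CovChainBasics

variable {P : Type*} [PartialOrder P]

/-- A covering chain from `x` to `y` of length `n`. -/
inductive CovChain : P → P → ℕ → Prop
  | refl (x : P) : CovChain x x 0
  | cons {x y z : P} {n : ℕ} (h : x ⋖ y) (hc : CovChain y z n) : CovChain x z (n + 1)

theorem CovChain.le {x y : P} {n : ℕ} (h : CovChain x y n) : x ≤ y := by
  induction h with
  | refl => exact le_rfl
  | cons h _ ih => exact h.le.trans ih

theorem CovChain.append {x y z : P} {n m : ℕ} (h1 : CovChain x y n) (h2 : CovChain y z m) :
    CovChain x z (n + m) := by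
  induction h1 with
  | refl => simpa using h2
  | @cons a b c k hab htail ih =>
    have := CovChain.cons hab (ih h2)
    rwa [show k + m + 1 = k + 1 + m by omega] at this

theorem covChain_single {x y : P} (h : x ⋖ y) : CovChain x y 1 :=
  .cons h (.refl y)

theorem CovChain.eq_of_zero {x y : P} (h : CovChain x y 0) : x = y := by
  cases h; rfl

theorem CovChain.zero_of_eq {x : P} {n : ℕ} (h : CovChain x x n) : n = 0 := by
  cases h with
  | refl => rfl
  | cons hc htail => exact absurd (hc.lt.trans_le htail.le) (lt_irrefl x)

theorem covChain_of_fn : ∀ (n : ℕ) (f : ℕ → P), (∀ i < n, f i ⋖ f (i + 1)) →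
    CovChain (f 0) (f n) n := by
  intro n
  induction n with
  | zero => intro f _; exact .refl _
  | succ k ih =>
    intro f hf
    exact .cons (hf 0 (Nat.succ_pos k)) (ih (fun i => f (i + 1)) (fun i hi => hf (i + 1) (by omega)))

theorem CovChain.exists_fn {x y : P} {n : ℕ} (h : CovChain x y n) :
    ∃ f : ℕ → P, f 0 = x ∧ f n = y ∧ ∀ i < n, f i ⋖ f (i + 1) := by
  induction h with
  | refl z => exact ⟨fun _ => z, rfl, rfl, fun i hi => absurd hi (Nat.not_lt_zero i)⟩
  | @cons a b c m hab _ ih =>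
    obtain ⟨f, hf0, hfn, hf⟩ := ih
    refine ⟨fun i => if i = 0 then a else f (i - 1), rfl, by simp [hfn], ?_⟩
    intro i hi
    rcases Nat.eq_zero_or_pos i with rfl | hpos
    · simpa [hf0] using hab
    · have h1 : i ≠ 0 := hpos.ne'
      have h2 : i + 1 ≠ 0 := by omega
      simp only [h1, h2, if_false]
      have : i + 1 - 1 = (i - 1) + 1 := by omega
      rw [this]
      exact hf (i - 1) (by omega)

theorem CovChain.exists_last : ∀ (n : ℕ) (x y : P), CovChain x y (n + 1) →
    ∃ w, CovChain x w n ∧ w ⋖ y := by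
  intro n
  induction n with
  | zero =>
    intro x y h
    cases h with
    | cons hab htail => exact ⟨x, .refl x, htail.eq_of_zero ▸ hab⟩
  | succ k ih =>
    intro x y h
    cases h with
    | cons hab htail =>
      obtain ⟨w, hw, hwy⟩ := ih _ _ htail
      exact ⟨w, .cons hab hw, hwy⟩

theorem fn_mono {n : ℕ} {f : ℕ → P} (hf : ∀ i < n, f i ⋖ f (i + 1)) :
    ∀ i j, i ≤ j → j ≤ n → f i ≤ f j := by
  intro i j hij hjn
  obtain ⟨d, rfl⟩ := Nat.exists_eq_add_of_le hij
  clear hij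
  induction d with
  | zero => exact le_rfl
  | succ k ih =>
    have h1 : f i ≤ f (i + k) := ih (by omega)
    have h2 : f (i + k) ⋖ f (i + k + 1) := hf (i + k) (by omega)
    exact h1.trans (by rw [show i + (k+1) = i + k + 1 by omega]; exact h2.le)

theorem fn_strict {n : ℕ} {f : ℕ → P} (hf : ∀ i < n, f i ⋖ f (i + 1)) :
    ∀ i j, i < j → j ≤ n → f i < f j := by
  intro i j hij hjn
  exact lt_of_lt_of_le (hf i (by omega)).lt (fn_mono hf (i + 1) j (by omega) hjn)

end CovChainBasics
section MaxChains

variable {P : Type*} [PartialOrder P]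

theorem IsMaxChainIn.left_mem {x y : P} {C : Set P} (hxy : x ≤ y)
    (hC : IsMaxChainIn (Set.Icc x y) C) : x ∈ C := by
  have h := hC.2.2 (C' := insert x C) ?_ ?_ (Set.subset_insert _ _)
  · rw [← h]; exact Set.mem_insert _ _
  · rw [Set.insert_subset_iff]
    exact ⟨⟨le_rfl, hxy⟩, hC.1⟩
  · exact hC.2.1.insert (fun b hb _ => Or.inl (hC.1 hb).1)

theorem IsMaxChainIn.right_mem {x y : P} {C : Set P} (hxy : x ≤ y)
    (hC : IsMaxChainIn (Set.Icc x y) C) : y ∈ C := by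
  have h := hC.2.2 (C' := insert y C) ?_ ?_ (Set.subset_insert _ _)
  · rw [← h]; exact Set.mem_insert _ _
  · rw [Set.insert_subset_iff]
    exact ⟨⟨hxy, le_rfl⟩, hC.1⟩
  · exact hC.2.1.insert (fun b hb _ => Or.inr (hC.1 hb).2)

/-- Direction 1: a covering chain yields a finite maximal chain. -/
theorem CovChain.toMaxChain {x y : P} {n : ℕ} (hc : CovChain x y n) :
    ∃ C : Set P, IsMaxChainIn (Set.Icc x y) C ∧ C.Finite ∧ C.ncard = n + 1 := by
  classical
  obtain ⟨f, hf0, hfn, hf⟩ := hc.exists_fn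
  refine ⟨f '' Set.Iic n, ⟨?_, ?_, ?_⟩, (Set.finite_Iic n).image f, ?_⟩
  · rintro _ ⟨i, hi, rfl⟩
    exact ⟨hf0 ▸ fn_mono hf 0 i (Nat.zero_le i) hi, hfn ▸ fn_mono hf i n hi le_rfl⟩
  · rintro _ ⟨i, hi, rfl⟩ _ ⟨j, hj, rfl⟩ _
    rcases le_total i j with h | h
    · exact Or.inl (fn_mono hf i j h hj)
    · exact Or.inr (fn_mono hf j i h hi)
  · intro C' hsub hchain hCC'
    apply Set.Subset.antisymm _ hCC'
    intro c hc'
    have hxc : f 0 ≤ c := hf0 ▸ (hsub hc').1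
    set i := Nat.findGreatest (fun i => f i ≤ c) n with hidef
    have hile : i ≤ n := Nat.findGreatest_le n
    have hfi : f i ≤ c := by
      have := Nat.findGreatest_spec (P := fun i => f i ≤ c) (Nat.zero_le n) hxc
      simpa [hidef] using this
    by_cases hin : i = n
    · have hcy : c ≤ f n := hfn ▸ (hsub hc').2
      have : c = f n := le_antisymm hcy (hin ▸ hfi)
      exact ⟨n, Set.mem_Iic.mpr le_rfl, this.symm⟩
    · have hilt : i < n := lt_of_le_of_ne hile hin
      have hng : ¬ f (i + 1) ≤ c :=
        Nat.findGreatest_is_greatest (Nat.lt_succ_self i) (by omega)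
      have hfi1C : f (i + 1) ∈ C' := hCC' ⟨i + 1, Set.mem_Iic.mpr (by omega), rfl⟩
      by_cases hceq : c = f (i + 1)
      · exact ⟨i + 1, Set.mem_Iic.mpr (by omega), hceq.symm⟩
      · have hcomp := hchain hc' hfi1C hceq
        have hcle : c ≤ f (i + 1) := by
          rcases hcomp with h | h
          · exact h
          · exact absurd h hng
        have hclt : c < f (i + 1) := lt_of_le_of_ne hcle hceq
        have hnlt : ¬ f i < c := fun h => (hf i hilt).2 h hclt
        have : c = f i := ((lt_or_eq_of_le hfi).resolve_left hnlt).symm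
        exact ⟨i, Set.mem_Iic.mpr hile, this.symm⟩
  · rw [Set.ncard_image_of_injOn, ← Finset.coe_Iic, Set.ncard_coe_finset, Nat.card_Iic]
    intro a ha b hb hab
    by_contra hne
    rcases lt_or_gt_of_ne hne with h | h
    · exact absurd hab (fn_strict hf a b h hb).ne
    · exact absurd hab.symm (fn_strict hf b a h ha).ne

/-- Direction 2: a finite maximal chain yields a covering chain. -/
theorem maxChainIn_toCov (N : ℕ) : ∀ x y : P, x ≤ y → ∀ C : Set P,
    IsMaxChainIn (Set.Icc x y) C → C.Finite → C.ncard = N →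
    1 ≤ N ∧ CovChain x y (N - 1) := by
  induction N using Nat.strong_induction_on with
  | _ N IH =>
  intro x y hxy C hC hfin hcard
  have hxC : x ∈ C := hC.left_mem hxy
  have hyC : y ∈ C := hC.right_mem hxy
  have hN1 : 1 ≤ N := hcard ▸ (Set.ncard_pos hfin).mpr ⟨x, hxC⟩
  refine ⟨hN1, ?_⟩
  by_cases hxyeq : x = y
  · have hCx : C = {x} := by
      apply Set.eq_singleton_iff_unique_mem.mpr
      refine ⟨hxC, fun c hc => ?_⟩
      have := hC.1 hc
      rw [← hxyeq] at this
      exact le_antisymm this.2 this.1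
    have : N = 1 := by rw [← hcard, hCx, Set.ncard_singleton]
    rw [this]
    exact hxyeq ▸ .refl x
  · -- peel off the minimum
    have hxlty : x < y := lt_of_le_of_ne hxy hxyeq
    set S := C \ {x} with hSdef
    have hSfin : S.Finite := hfin.diff
    have hyS : y ∈ S := ⟨hyC, fun h => hxyeq (Set.mem_singleton_iff.mp h).symm⟩
    obtain ⟨x', hx'S, hx'min⟩ : ∃ x' ∈ S, ∀ c ∈ S, c ≤ x' → x' = c := by
      obtain ⟨m, hm⟩ := hSfin.exists_minimal ⟨y, hyS⟩
      exact ⟨m, hm.1, fun c hc h => le_antisymm (hm.2 hc h) h⟩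
    have hleast : ∀ c ∈ S, x' ≤ c := by
      intro c hc
      by_cases hcx' : c = x'
      · exact hcx'.ge
      · rcases hC.2.1 hc.1 hx'S.1 hcx' with h | h
        · exact le_of_eq (hx'min c hc h)
        · exact h
    have hxltx' : x < x' := lt_of_le_of_ne (hC.1 hx'S.1).1 (fun h => hx'S.2 h.symm)
    have hcov : x ⋖ x' := by
      refine ⟨hxltx', fun c hxc hcx' => ?_⟩
      have hins : insert c C = C := by
        apply hC.2.2
        · rw [Set.insert_subset_iff]
          exact ⟨⟨hxc.le, hcx'.le.trans (hC.1 hx'S.1).2⟩, hC.1⟩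
        · apply hC.2.1.insert
          intro b hb _
          by_cases hbx : b = x
          · exact Or.inr (hbx ▸ hxc.le)
          · exact Or.inl (hcx'.le.trans (hleast b ⟨hb, hbx⟩))
        · exact Set.subset_insert _ _
      have hcC : c ∈ C := hins ▸ Set.mem_insert _ _
      have : c ∈ S := ⟨hcC, fun h => absurd (Set.mem_singleton_iff.mp h ▸ hxc) (lt_irrefl x)⟩
      exact absurd (hleast c this) fun hle => lt_irrefl c (hcx'.trans_le hle)
    have hS : IsMaxChainIn (Set.Icc x' y) S := by
      refine ⟨fun d hd => ⟨hleast d hd, (hC.1 hd.1).2⟩, hC.2.1.mono Set.diff_subset, ?_⟩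
      intro C'' hsub'' hchain'' hSC''
      have hxnot : x ∉ C'' := fun h => lt_irrefl x (hxltx'.trans_le (hsub'' h).1)
      have hins : insert x C'' = C := by
        apply hC.2.2
        · rw [Set.insert_subset_iff]
          refine ⟨⟨le_rfl, hxy⟩, fun d hd => ⟨(hxltx'.le).trans (hsub'' hd).1, (hsub'' hd).2⟩⟩
        · apply hchain''.insert
          intro b hb _
          exact Or.inl (hxltx'.le.trans (hsub'' hb).1)
        · intro c hc
          by_cases hcx : c = x
          · exact hcx ▸ Set.mem_insert _ _
          · exact Set.mem_insert_of_mem _ (hSC'' ⟨hc, hcx⟩)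
      apply Set.Subset.antisymm _ hSC''
      intro c hc
      have hcC : c ∈ C := hins ▸ Set.mem_insert_of_mem _ hc
      exact ⟨hcC, fun h => hxnot ((Set.mem_singleton_iff.mp h) ▸ hc)⟩
    have hScard : S.ncard = N - 1 := by
      have h2 := Set.ncard_diff_singleton_add_one hxC hfin
      rw [hSdef, ← hcard]
      omega
    have hx'y : x' ≤ y := hleast y hyS
    obtain ⟨h1, h2⟩ := IH (N - 1) (by omega) x' y hx'y S hS hSfin hScard
    have := CovChain.cons hcov h2
    rwa [show N - 1 - 1 + 1 = N - 1 by omega] at this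

/-- Zorn: existence of a maximal chain in `[x,y]`. -/
theorem exists_maxChainIn_s7 (x y : P) (hxy : x ≤ y) : ∃ C, IsMaxChainIn (Set.Icc x y) C := by
  obtain ⟨m, _, hm⟩ := zorn_subset_nonempty
    {C : Set P | C ⊆ Set.Icc x y ∧ IsChain (· ≤ ·) C}
    (fun c hcS hcchain _ => by
      refine ⟨⋃₀ c, ⟨?_, ?_⟩, fun s hs => Set.subset_sUnion_of_mem hs⟩
      · exact Set.sUnion_subset fun s hs => (hcS hs).1
      · rintro a ⟨s, hs, has⟩ b ⟨t, ht, hbt⟩ hab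
        rcases hcchain.total hs ht with h | h
        · exact (hcS ht).2 (h has) hbt hab
        · exact (hcS hs).2 has (h hbt) hab)
    ∅ ⟨Set.empty_subset _, Set.subsingleton_empty.isChain⟩
  exact ⟨m, hm.1.1, hm.1.2, fun C' hsub hchain hmC' =>
    Set.Subset.antisymm (hm.2 ⟨hsub, hchain⟩ hmC') hmC'⟩

theorem exists_covChain (hdisc : IsDiscretePoset P) {x y : P} (hxy : x ≤ y) :
    ∃ n, CovChain x y n := by
  obtain ⟨C, hC⟩ := exists_maxChainIn_s7 x y hxy
  have hfin := hdisc x y C hC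
  obtain ⟨_, h2⟩ := maxChainIn_toCov C.ncard x y hxy C hC hfin rfl
  exact ⟨_, h2⟩

end MaxChains
section Heights

variable {L : Type*} [SemilatticeSup L]

/-- The length of a shortest covering chain. -/
noncomputable def covH {P : Type*} [PartialOrder P] (x y : P) : ℕ :=
  sInf {n | CovChain x y n}

theorem covH_spec {P : Type*} [PartialOrder P] (hdisc : IsDiscretePoset P) {x y : P}
    (hxy : x ≤ y) : CovChain x y (covH x y) :=
  Nat.sInf_mem (exists_covChain hdisc hxy)

/-- Jordan–Dedekind: all covering chains between two fixed elements have the same length. -/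
theorem covChain_length_eq (hdisc : IsDiscretePoset L) (hsm : Semimodular L) :
    ∀ N : ℕ, ∀ x y : L, covH x y = N → ∀ m, CovChain x y m → m = N := by
  intro N
  induction N using Nat.strong_induction_on with
  | _ N IH =>
  intro x y hH m hm
  have hne : {n | CovChain x y n}.Nonempty := ⟨m, hm⟩
  have hN : CovChain x y N := hH ▸ Nat.sInf_mem hne
  match N, hH with
  | 0, hH =>
    have hxy : x = y := hN.eq_of_zero
    exact (hxy ▸ hm : CovChain x x m).zero_of_eq
  | (k + 1), hH =>
    cases hN with
    | @cons _ a1 _ _ ha ta =>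
    cases hm with
    | refl =>
      exact absurd ((CovChain.cons ha ta : CovChain x x (k+1)).zero_of_eq) (by omega)
    | @cons _ b1 _ l hb tb =>
      -- covH a1 y = k
      have hHa : covH a1 y = k := by
        have hle : covH a1 y ≤ k := Nat.sInf_le ta
        have hmem : CovChain a1 y (covH a1 y) := Nat.sInf_mem ⟨k, ta⟩
        have : covH x y ≤ covH a1 y + 1 := Nat.sInf_le (.cons ha hmem)
        omega
      by_cases heq : a1 = b1
      · subst heq
        have := IH k (by omega) a1 y hHa l tb
        omega
      · obtain ⟨hc1, hc2⟩ := hsm a1 b1 x heq ha hb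
        have hcy : a1 ⊔ b1 ≤ y := sup_le ta.le tb.le
        obtain ⟨j, hj⟩ := exists_covChain hdisc hcy
        have h1 : CovChain a1 y (j + 1) := .cons hc1 hj
        have hj1 : j + 1 = k := IH k (by omega) a1 y hHa (j + 1) h1
        have h2 : CovChain b1 y k := hj1 ▸ CovChain.cons hc2 hj
        have hk'le : covH b1 y ≤ k := Nat.sInf_le h2
        have e1 : k = covH b1 y := IH (covH b1 y) (by omega) b1 y rfl k h2
        have e2 : l = covH b1 y := IH (covH b1 y) (by omega) b1 y rfl l tb
        omega

theorem covH_eq (hdisc : IsDiscretePoset L) (hsm : Semimodular L) {x y : L} {n : ℕ}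
    (h : CovChain x y n) : covH x y = n :=
  (covChain_length_eq hdisc hsm (covH x y) x y rfl n h).symm

theorem covH_add (hdisc : IsDiscretePoset L) (hsm : Semimodular L) {x y z : L}
    (hxy : x ≤ y) (hyz : y ≤ z) : covH x z = covH x y + covH y z :=
  covH_eq hdisc hsm ((covH_spec hdisc hxy).append (covH_spec hdisc hyz))

theorem covH_self (hdisc : IsDiscretePoset L) (hsm : Semimodular L) (x : L) :
    covH x x = 0 :=
  covH_eq hdisc hsm (.refl x)

theorem covH_covBy (hdisc : IsDiscretePoset L) (hsm : Semimodular L) {x y : L}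
    (h : x ⋖ y) : covH x y = 1 :=
  covH_eq hdisc hsm (covChain_single h)

/-- `intervalHeight` agrees with the shortest covering chain length. -/
theorem intervalHeight_eq (hdisc : IsDiscretePoset L) {x y : L} (hxy : x ≤ y) :
    intervalHeight x y = covH x y := by
  unfold intervalHeight covH
  congr 1
  ext n
  constructor
  · rintro ⟨C, hC, hfin, hcard⟩
    obtain ⟨_, h2⟩ := maxChainIn_toCov (n + 1) x y hxy C hC hfin hcard
    simpa using h2
  · intro h
    exact CovChain.toMaxChain h

/-- The diamond lemma in a semimodular join semilattice. -/
theorem diamond (hdisc : IsDiscretePoset L) (hsm : Semimodular L) :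
    ∀ N : ℕ, ∀ x z w : L, covH x w = N → x ⋖ z → x ≤ w → z ⊔ w = w ∨ w ⋖ z ⊔ w := by
  intro N
  induction N using Nat.strong_induction_on with
  | _ N IH =>
  intro x z w hH hxz hxw
  have hchain : CovChain x w N := hH ▸ covH_spec hdisc hxw
  match N, hH, hchain with
  | 0, hH, hchain =>
    have hxweq : x = w := hchain.eq_of_zero
    subst hxweq
    right
    rwa [sup_eq_left.mpr hxz.le]
  | (k + 1), hH, hchain =>
    obtain ⟨w', hw', hwcov⟩ := CovChain.exists_last k x w hchain
    have hHw' : covH x w' = k := covH_eq hdisc hsm hw'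
    rcases IH k (by omega) x z w' hHw' hxz hw'.le with h | h
    · -- z ≤ w'
      left
      exact sup_eq_right.mpr ((sup_eq_right.mp h).trans hwcov.le)
    · by_cases h2 : z ⊔ w' = w
      · left
        exact sup_eq_right.mpr (le_sup_left.trans h2.le)
      · have hne : w ≠ z ⊔ w' := fun hh => h2 hh.symm
        obtain ⟨hcov, _⟩ := hsm w (z ⊔ w') w' hne hwcov h
        right
        have : w ⊔ (z ⊔ w') = z ⊔ w := by
          rw [sup_comm z w', ← sup_assoc, sup_eq_left.mpr hwcov.le, sup_comm]
        rwa [this] at hcov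

end Heights
section Graph

variable {L : Type*} [SemilatticeSup L]

theorem CovChain.toWalk {x y : L} {n : ℕ} (h : CovChain x y n) :
    ∃ w : (hasseGraph L).Walk x y, w.length = n := by
  induction h with
  | refl z => exact ⟨.nil, rfl⟩
  | cons hab _ ih =>
    obtain ⟨w, hw⟩ := ih
    exact ⟨.cons (show (hasseGraph L).Adj _ _ from Or.inl hab) w, by simp [hw]⟩

theorem dist_le_D (hdisc : IsDiscretePoset L) (x y : L) :
    (hasseGraph L).dist x y ≤ covH x (x ⊔ y) + covH y (x ⊔ y) := by
  obtain ⟨w1, h1⟩ := (covH_spec hdisc (le_sup_left : x ≤ x ⊔ y)).toWalk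
  obtain ⟨w2, h2⟩ := (covH_spec hdisc (le_sup_right : y ≤ x ⊔ y)).toWalk
  have := SimpleGraph.dist_le (w1.append w2.reverse)
  rwa [SimpleGraph.Walk.length_append, SimpleGraph.Walk.length_reverse, h1, h2] at this

theorem step_lemma (hdisc : IsDiscretePoset L) (hsm : Semimodular L) {x z : L}
    (hadj : (hasseGraph L).Adj x z) (y : L) :
    covH x (x ⊔ y) + covH y (x ⊔ y) ≤ covH z (z ⊔ y) + covH y (z ⊔ y) + 1 := by
  rcases (show x ⋖ z ∨ z ⋖ x from hadj) with hxz | hzx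
  · by_cases hz : z ≤ x ⊔ y
    · have he : z ⊔ y = x ⊔ y :=
        le_antisymm (sup_le hz le_sup_right) (sup_le_sup_right hxz.le y)
      have e1 : covH x (x ⊔ y) = covH x z + covH z (x ⊔ y) :=
        covH_add hdisc hsm hxz.le hz
      rw [covH_covBy hdisc hsm hxz] at e1
      rw [he] at *
      omega
    · have hcov : x ⊔ y ⋖ z ⊔ y := by
        have hd := diamond hdisc hsm (covH x (x ⊔ y)) x z (x ⊔ y) rfl hxz le_sup_left
        have hzxy : z ⊔ (x ⊔ y) = z ⊔ y := by
          rw [← sup_assoc, sup_eq_left.mpr hxz.le]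
        rcases hd with h | h
        · exact absurd (sup_eq_right.mp h) hz
        · rwa [hzxy] at h
      have e1 : covH y (z ⊔ y) = covH y (x ⊔ y) + 1 := by
        rw [covH_add hdisc hsm le_sup_right hcov.le, covH_covBy hdisc hsm hcov]
      have e2 : covH x (z ⊔ y) = covH x (x ⊔ y) + 1 := by
        rw [covH_add hdisc hsm le_sup_left hcov.le, covH_covBy hdisc hsm hcov]
      have e3 : covH x (z ⊔ y) = 1 + covH z (z ⊔ y) := by
        rw [covH_add hdisc hsm hxz.le le_sup_left, covH_covBy hdisc hsm hxz]
      omega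
  · by_cases hx : x ≤ z ⊔ y
    · have he : x ⊔ y = z ⊔ y :=
        le_antisymm (sup_le hx le_sup_right) (sup_le_sup_right hzx.le y)
      have e1 : covH z (z ⊔ y) = covH z x + covH x (z ⊔ y) :=
        covH_add hdisc hsm hzx.le hx
      rw [covH_covBy hdisc hsm hzx] at e1
      rw [he] at *
      omega
    · have hcov : z ⊔ y ⋖ x ⊔ y := by
        have hd := diamond hdisc hsm (covH z (z ⊔ y)) z x (z ⊔ y) rfl hzx le_sup_left
        have hxzy : x ⊔ (z ⊔ y) = x ⊔ y := by
          rw [← sup_assoc, sup_eq_left.mpr hzx.le]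
        rcases hd with h | h
        · exact absurd (sup_eq_right.mp h) hx
        · rwa [hxzy] at h
      have e1 : covH y (x ⊔ y) = covH y (z ⊔ y) + 1 := by
        rw [covH_add hdisc hsm le_sup_right hcov.le, covH_covBy hdisc hsm hcov]
      have e2 : covH z (x ⊔ y) = covH z (z ⊔ y) + 1 := by
        rw [covH_add hdisc hsm le_sup_left hcov.le, covH_covBy hdisc hsm hcov]
      have e3 : covH z (x ⊔ y) = 1 + covH x (x ⊔ y) := by
        rw [covH_add hdisc hsm hzx.le le_sup_left, covH_covBy hdisc hsm hzx]
      omega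

theorem walk_bound (hdisc : IsDiscretePoset L) (hsm : Semimodular L) {x y : L}
    (w : (hasseGraph L).Walk x y) :
    covH x (x ⊔ y) + covH y (x ⊔ y) ≤ w.length := by
  induction w with
  | nil => simp [sup_idem, covH_self hdisc hsm]
  | @cons a b c hadj p ih =>
    calc covH a (a ⊔ c) + covH c (a ⊔ c)
        ≤ covH b (b ⊔ c) + covH c (b ⊔ c) + 1 := step_lemma hdisc hsm hadj c
      _ ≤ p.length + 1 := by omega
      _ = (SimpleGraph.Walk.cons hadj p).length := by
          rw [SimpleGraph.Walk.length_cons]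

end Graph

/-- In a discrete, semimodular join semilattice the up–down distance equals the zigzag
distance (graph distance in the Hasse diagram). -/
theorem stmt7 {L : Type*} [SemilatticeSup L]
    (hdisc : IsDiscretePoset L) (hsm : Semimodular L) :
    ∀ x y : L,
      intervalHeight x (x ⊔ y) + intervalHeight y (x ⊔ y) = (hasseGraph L).dist x y := by
  intro x y
  rw [intervalHeight_eq hdisc le_sup_left, intervalHeight_eq hdisc le_sup_right]
  apply le_antisymm
  · -- sum ≤ dist
    have hreach : (hasseGraph L).Reachable x y := by
      obtain ⟨w1, _⟩ := (covH_spec hdisc (le_sup_left : x ≤ x ⊔ y)).toWalk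
      obtain ⟨w2, _⟩ := (covH_spec hdisc (le_sup_right : y ≤ x ⊔ y)).toWalk
      exact ⟨w1.append w2.reverse⟩
    obtain ⟨w, hw⟩ := hreach.exists_walk_length_eq_dist
    exact hw ▸ walk_bound hdisc hsm w
  · exact dist_le_D hdisc x y
end
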